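/- Let (X', O) be a stationary hidden Markov model: X' is a stationary, irreducible, aperiodic Markov chain on a finite state space 𝒳 with transition matrix P and invariant distribution π, and the O_t on finite alphabet 𝒪 are conditionally independent given X' with P(O_t = i | X'_t = ℓ) = W_{ℓ,i}. Let g : 𝒳 → 𝒴, Y_t = g(X'_t), and Q_{i,j} = P(Y_2 = j | Y_1 = i). Define the lifted HMM (X̃', Õ) on the same spaces by the state transition matrix P'_{ℓ,m} = ( π_m / Σ_{l ∈ g^{-1}(g(m))} π_l ) · Q_{g(ℓ),g(m)} (the π-lifting of Q) and the observation matrix W'_{ℓ,i} = P(O_1 = i | Y_1 = g(ℓ)), with X̃' started from π. Then the Kullback–Leibler divergence rate between the joint processes satisfies lim_{T→∞} (1/T) D( p_{(X',O)_1^T} ‖ p_{(X̃',Õ)_1^T} ) = I(X'_1; X'_2) − I(Y_1; Y_2) + I(O_1; X'_1 | Y_1). -/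
import Mathlib


open Classical

/-- Finite-dimensional distributions of the Markov chain with initial distribution `μ`
and transition matrix `P`. -/
noncomputable def markovFD {α : Type*} [Fintype α] (μ : α → ℝ) (P : α → α → ℝ)
    (T : ℕ) (x : Fin T → α) : ℝ :=
  ∏ i : Fin T,
    if (i : ℕ) = 0 then μ (x i)
    else P (x ⟨(i : ℕ) - 1, lt_of_le_of_lt (Nat.sub_le _ _) i.isLt⟩) (x i)

/-- Finite-dimensional distributions of the hidden Markov model `(μ, P, W)`. -/
noncomputable def hmmFD {α β : Type*} [Fintype α] [Fintype β]
    (μ : α → ℝ) (P : α → α → ℝ) (W : α → β → ℝ) (T : ℕ) (z : Fin T → α × β) : ℝ :=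
  markovFD μ P T (fun i => (z i).1) * ∏ i : Fin T, W (z i).1 (z i).2

/-- Irreducibility of a transition matrix. -/
def MCIrreducible {α : Type*} [Fintype α] [DecidableEq α] (P : Matrix α α ℝ) : Prop :=
  ∀ i j, ∃ n : ℕ, 0 < n ∧ 0 < (P ^ n) i j

/-- Aperiodicity of a transition matrix. -/
def MCAperiodic {α : Type*} [Fintype α] [DecidableEq α] (P : Matrix α α ℝ) : Prop :=
  ∀ i, ∃ N : ℕ, ∀ n, N ≤ n → 0 < (P ^ n) i i

/-- Kullback–Leibler divergence between finite PMFs, `+∞` in the absence of absolute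
continuity. -/
noncomputable def klDiv {γ : Type*} [Fintype γ] (p q : γ → ℝ) : EReal :=
  if ∀ z, q z = 0 → p z = 0 then
    (((∑ z, p z * Real.log (p z / q z)) : ℝ) : EReal)
  else (⊤ : EReal)

/-- Shannon mutual information `I(A; B)` of a joint PMF `J` on `A × B`. -/
noncomputable def mutInf {A B : Type*} [Fintype A] [Fintype B] (J : A → B → ℝ) : ℝ :=
  ∑ a, ∑ b, J a b * Real.log (J a b / ((∑ b', J a b') * (∑ a', J a' b)))

/-- Shannon conditional mutual information `I(A; B | C)` of a joint PMF `J` on `A × B × C`. -/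
noncomputable def condMutInf {A B C : Type*} [Fintype A] [Fintype B] [Fintype C]
    (J : A → B → C → ℝ) : ℝ :=
  ∑ a, ∑ b, ∑ c, J a b c *
    Real.log ((J a b c * (∑ a', ∑ b', J a' b' c)) /
      ((∑ b', J a b' c) * (∑ a', J a' b c)))

/-- Aggregated transition matrix `Q_{i,j} = P(Y_2 = j | Y_1 = i)` for `Y_t = g(X_t)`. -/
noncomputable def aggQ {α B : Type*} [Fintype α] (π : α → ℝ) (P : α → α → ℝ)
    (g : α → B) (i j : B) : ℝ :=
  (∑ ℓ, ∑ m, if g ℓ = i ∧ g m = j then π ℓ * P ℓ m else 0) /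
    (∑ ℓ, if g ℓ = i then π ℓ else 0)

/-- The `π`-lifting `P'_{ℓ,m} = (π_m / Σ_{l ∈ g⁻¹(g(m))} π_l) · Q_{g(ℓ), g(m)}`. -/
noncomputable def piLift {α B : Type*} [Fintype α] (π : α → ℝ) (P : α → α → ℝ)
    (g : α → B) (ℓ m : α) : ℝ :=
  (π m / (∑ l, if g l = g m then π l else 0)) * aggQ π P g (g ℓ) (g m)

/-- Joint PMF of `(Y_1, Y_2)` for `Y_t = g(X_t)`. -/
noncomputable def jointY {α B : Type*} [Fintype α] (π : α → ℝ) (P : α → α → ℝ)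
    (g : α → B) (i j : B) : ℝ :=
  ∑ ℓ, ∑ m, if g ℓ = i ∧ g m = j then π ℓ * P ℓ m else 0

section S1
variable {α β γ : Type*} [Fintype α] [Fintype β] [Fintype γ]

lemma sum_snoc (T : ℕ) (F : (Fin (T+1) → γ) → ℝ) :
    ∑ z : Fin (T+1) → γ, F z = ∑ z : Fin T → γ, ∑ v : γ, F (Fin.snoc z v) := by
  rw [← (Fin.snocEquiv (fun _ => γ)).sum_comp F, Fintype.sum_prod_type]
  rw [Finset.sum_comm]
  rfl

omit [Fintype β] [Fintype γ] in
lemma markovFD_snoc (μ : α → ℝ) (P : α → α → ℝ) (T : ℕ) (x : Fin (T+1) → α) (a : α) :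
    markovFD μ P (T+2) (Fin.snoc x a) = markovFD μ P (T+1) x * P (x (Fin.last T)) a := by
  unfold markovFD
  rw [Fin.prod_univ_castSucc]
  congr 1
  · apply Finset.prod_congr rfl
    intro i _
    have e2 : (Fin.snoc x a : Fin (T+2) → α)
          ⟨((i.castSucc : Fin (T+2)) : ℕ) - 1,
            lt_of_le_of_lt (Nat.sub_le _ _) (i.castSucc).isLt⟩
        = x ⟨(i:ℕ)-1, lt_of_le_of_lt (Nat.sub_le _ _) i.isLt⟩ := by
      have h : (⟨((i.castSucc : Fin (T+2)) : ℕ) - 1,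
            lt_of_le_of_lt (Nat.sub_le _ _) (i.castSucc).isLt⟩ : Fin (T+2))
          = Fin.castSucc ⟨(i:ℕ)-1, lt_of_le_of_lt (Nat.sub_le _ _) i.isLt⟩ := rfl
      rw [h, Fin.snoc_castSucc]
    rw [e2, Fin.snoc_castSucc]
    by_cases h : (i:ℕ) = 0
    · rw [if_pos h, if_pos (show ((i.castSucc : Fin (T+2)) : ℕ) = 0 from h)]
    · rw [if_neg h, if_neg (show ¬ ((i.castSucc : Fin (T+2)) : ℕ) = 0 from h)]
  · have e1 : (Fin.snoc x a : Fin (T+2) → α)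
          ⟨((Fin.last (T+1) : Fin (T+2)) : ℕ) - 1,
            lt_of_le_of_lt (Nat.sub_le _ _) (Fin.last (T+1)).isLt⟩
        = x (Fin.last T) := by
      have h : (⟨((Fin.last (T+1) : Fin (T+2)) : ℕ) - 1,
            lt_of_le_of_lt (Nat.sub_le _ _) (Fin.last (T+1)).isLt⟩ : Fin (T+2))
          = Fin.castSucc (Fin.last T) := rfl
      rw [h, Fin.snoc_castSucc]
    rw [e1, Fin.snoc_last, if_neg (show ¬ ((Fin.last (T+1) : Fin (T+2)) : ℕ) = 0 from
      Nat.succ_ne_zero T)]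

omit [Fintype α] [Fintype β] [Fintype γ] in
lemma fst_snoc (T : ℕ) (z : Fin (T+1) → α × β) (v : α × β) :
    (fun i => ((Fin.snoc z v : Fin (T+2) → α × β) i).1) = Fin.snoc (fun i => (z i).1) v.1 := by
  funext i
  induction i using Fin.lastCases with
  | last => rw [Fin.snoc_last, Fin.snoc_last]
  | cast i => rw [Fin.snoc_castSucc, Fin.snoc_castSucc]

lemma hmmFD_snoc (μ : α → ℝ) (P : α → α → ℝ) (W : α → β → ℝ) (T : ℕ)
    (z : Fin (T+1) → α × β) (v : α × β) :
    hmmFD μ P W (T+2) (Fin.snoc z v)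
      = hmmFD μ P W (T+1) z * (P (z (Fin.last T)).1 v.1 * W v.1 v.2) := by
  unfold hmmFD
  rw [fst_snoc, markovFD_snoc]
  rw [Fin.prod_univ_castSucc]
  simp only [Fin.snoc_castSucc, Fin.snoc_last]
  ring

lemma hmmFD_one (μ : α → ℝ) (P : α → α → ℝ) (W : α → β → ℝ) (z : Fin 1 → α × β) :
    hmmFD μ P W 1 z = μ (z 0).1 * W (z 0).1 (z 0).2 := by
  unfold hmmFD markovFD
  simp

omit [Fintype α] [Fintype β] in
lemma sum_one (F : (Fin 1 → γ) → ℝ) :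
    ∑ z : Fin 1 → γ, F z = ∑ v : γ, F (fun _ => v) := by
  rw [← (Equiv.funUnique (Fin 1) γ).symm.sum_comp F]
  rfl

end S1

section S2
variable {α β : Type*} [Fintype α] [Fintype β]

-- π is strictly positive
lemma pi_pos (P : Matrix α α ℝ) [DecidableEq α] (hP0 : ∀ i j, 0 ≤ P i j)
    (hirr : ∀ i j, ∃ n : ℕ, 0 < n ∧ 0 < (P ^ n) i j)
    (π : α → ℝ) (hπ0 : ∀ i, 0 ≤ π i) (hπ1 : ∑ i, π i = 1)
    (hinv : ∀ j, ∑ i, π i * P i j = π j) : ∀ j, 0 < π j := by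
  have hPn0 : ∀ n i j, 0 ≤ (P ^ n) i j := by
    intro n
    induction n with
    | zero => intro i j; simp [Matrix.one_apply]; positivity
    | succ n ih =>
      intro i j
      rw [pow_succ]
      exact Finset.sum_nonneg fun k _ => mul_nonneg (ih i k) (hP0 k j)
  have hinvn : ∀ n j, ∑ i, π i * (P ^ n) i j = π j := by
    intro n
    induction n with
    | zero => intro j; simp [Matrix.one_apply]
    | succ n ih =>
      intro j
      rw [pow_succ]
      have : ∀ i, π i * (P ^ n * P) i j = ∑ k, π i * ((P ^ n) i k * P k j) := by
        intro i; rw [Matrix.mul_apply, Finset.mul_sum]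
      simp_rw [this]
      rw [Finset.sum_comm]
      have : ∀ k, ∑ i, π i * ((P ^ n) i k * P k j) = π k * P k j := by
        intro k
        rw [← ih k, Finset.sum_mul]
        exact Finset.sum_congr rfl fun i _ => by ring
      simp_rw [this]
      exact hinv j
  -- some i with π i > 0
  obtain ⟨i, -, hi⟩ : ∃ i ∈ Finset.univ, 0 < π i := by
    by_contra h
    push_neg at h
    have : ∑ i, π i ≤ 0 := Finset.sum_nonpos fun i hm => (h i hm)
    rw [hπ1] at this; linarith
  intro j
  obtain ⟨n, -, hn⟩ := hirr i j
  calc (0:ℝ) < π i * (P ^ n) i j := mul_pos hi hn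
    _ ≤ ∑ k, π k * (P ^ n) k j :=
        Finset.single_le_sum (fun k _ => mul_nonneg (hπ0 k) (hPn0 n k j)) (Finset.mem_univ i)
    _ = π j := hinvn n j

end S2

section S3
variable {α β : Type*} [Fintype α] [Fintype β]

lemma hmmFD_nonneg (μ : α → ℝ) (P : α → α → ℝ) (W : α → β → ℝ)
    (hμ : ∀ a, 0 ≤ μ a) (hP : ∀ a b, 0 ≤ P a b) (hW : ∀ a b, 0 ≤ W a b)
    (T : ℕ) (z : Fin T → α × β) : 0 ≤ hmmFD μ P W T z := by
  unfold hmmFD markovFD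
  apply mul_nonneg
  · apply Finset.prod_nonneg
    intro i _
    split
    · exact hμ _
    · exact hP _ _
  · exact Finset.prod_nonneg fun i _ => hW _ _

lemma hmmFD_pos_transfer (μ μ' : α → ℝ) (P P' : α → α → ℝ) (W W' : α → β → ℝ)
    (hμ : ∀ a, μ a ≠ 0 → 0 < μ' a) (hP : ∀ a b, P a b ≠ 0 → 0 < P' a b)
    (hW : ∀ a b, W a b ≠ 0 → 0 < W' a b)
    (T : ℕ) (z : Fin T → α × β) (h : hmmFD μ P W T z ≠ 0) :
    0 < hmmFD μ' P' W' T z := by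
  unfold hmmFD markovFD at *
  rcases mul_ne_zero_iff.1 h with ⟨h1, h2⟩
  rw [Finset.prod_ne_zero_iff] at h1 h2
  apply mul_pos
  · apply Finset.prod_pos
    intro i hi
    have := h1 i hi
    split
    · apply hμ
      rwa [if_pos (by assumption)] at this
    · apply hP
      rwa [if_neg (by assumption)] at this
  · exact Finset.prod_pos fun i hi => hW _ _ (h2 i hi)

-- marginal of last hidden state is π
lemma last_marginal (π : α → ℝ) (P : α → α → ℝ) (W : α → β → ℝ)
    (hP1 : ∀ i, ∑ j, P i j = 1) (hinv : ∀ j, ∑ i, π i * P i j = π j)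
    (hW1 : ∀ ℓ, ∑ i, W ℓ i = 1) :
    ∀ (T : ℕ) (h : α → ℝ),
      ∑ z : Fin (T+1) → α × β, hmmFD π P W (T+1) z * h (z (Fin.last T)).1
        = ∑ ℓ, π ℓ * h ℓ := by
  intro T
  induction T with
  | zero =>
    intro h
    rw [sum_one]
    have e : ∀ v : α × β,
        hmmFD π P W 1 (fun _ => v) * h (((fun _ => v) : Fin 1 → α × β) (Fin.last 0)).1
          = π v.1 * h v.1 * W v.1 v.2 := by
      intro v; rw [hmmFD_one]; ring
    rw [Finset.sum_congr rfl (fun v _ => e v), Fintype.sum_prod_type]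
    apply Finset.sum_congr rfl
    intro x _
    show ∑ y : β, π x * h x * W x y = π x * h x
    rw [← Finset.mul_sum, hW1, mul_one]
  | succ T ih =>
    intro h
    rw [sum_snoc]
    have step : ∀ z : Fin (T+1) → α × β,
        ∑ v : α × β, hmmFD π P W (T+2) (Fin.snoc z v) * h ((Fin.snoc z v : Fin (T+2) → α × β) (Fin.last (T+1))).1
          = hmmFD π P W (T+1) z * (∑ x, P (z (Fin.last T)).1 x * h x) := by
      intro z
      simp only [hmmFD_snoc, Fin.snoc_last]
      rw [Fintype.sum_prod_type, Finset.mul_sum]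
      apply Finset.sum_congr rfl
      intro x _
      have e : ∀ o : β, hmmFD π P W (T+1) z * (P (z (Fin.last T)).1 x * W x o) * h x
          = hmmFD π P W (T+1) z * (P (z (Fin.last T)).1 x * h x) * W x o := by
        intro o; ring
      rw [Finset.sum_congr rfl (fun o _ => e o), ← Finset.mul_sum, hW1, mul_one]
    rw [Finset.sum_congr rfl (fun z _ => step z)]
    rw [ih (fun a => ∑ x, P a x * h x)]
    simp only [Finset.mul_sum]
    rw [Finset.sum_comm]
    apply Finset.sum_congr rfl
    intro x _
    have e : ∀ ℓ, π ℓ * (P ℓ x * h x) = π ℓ * P ℓ x * h x := fun ℓ => by ring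
    rw [Finset.sum_congr rfl (fun ℓ _ => e ℓ), ← Finset.sum_mul, hinv]
end S3

section S4
variable {α β : Type*} [Fintype α] [Fintype β]

lemma log_split3 (a b c d e f : ℝ) (ha : 0 ≤ a) (hb : 0 ≤ b) (hc : 0 ≤ c)
    (hd : a ≠ 0 → 0 < d) (he : b ≠ 0 → 0 < e) (hf : c ≠ 0 → 0 < f) :
    a * (b * c) * Real.log ((a * (b * c)) / (d * (e * f)))
      = a * (b * c) * Real.log (a / d) + a * (b * c) * Real.log (b / e)
        + a * (b * c) * Real.log (c / f) := by
  by_cases h : a * (b * c) = 0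
  · rw [h]; ring
  · have ha' : a ≠ 0 := fun h0 => h (by rw [h0]; ring)
    have hb' : b ≠ 0 := fun h0 => h (by rw [h0]; ring)
    have hc' : c ≠ 0 := fun h0 => h (by rw [h0]; ring)
    have hd' := hd ha'
    have he' := he hb'
    have hf' := hf hc'
    have key : (a * (b * c)) / (d * (e * f)) = (a / d) * ((b / e) * (c / f)) := by
      field_simp
    rw [key, Real.log_mul (div_ne_zero ha' (ne_of_gt hd'))
        (mul_ne_zero (div_ne_zero hb' (ne_of_gt he')) (div_ne_zero hc' (ne_of_gt hf'))),
      Real.log_mul (div_ne_zero hb' (ne_of_gt he')) (div_ne_zero hc' (ne_of_gt hf'))]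
    ring

variable (π : α → ℝ) (P P' : α → α → ℝ) (W W' : α → β → ℝ)

lemma K_step
    (hπpos : ∀ a, 0 < π a)
    (hP0 : ∀ a b, 0 ≤ P a b) (hP1 : ∀ i, ∑ j, P i j = 1)
    (hinv : ∀ j, ∑ i, π i * P i j = π j)
    (hW0 : ∀ a b, 0 ≤ W a b) (hW1 : ∀ ℓ, ∑ i, W ℓ i = 1)
    (hP' : ∀ a b, P a b ≠ 0 → 0 < P' a b) (hW' : ∀ a b, W a b ≠ 0 → 0 < W' a b)
    (T : ℕ) :
    ∑ z : Fin (T+2) → α × β, hmmFD π P W (T+2) z *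
        Real.log (hmmFD π P W (T+2) z / hmmFD π P' W' (T+2) z)
      = (∑ z : Fin (T+1) → α × β, hmmFD π P W (T+1) z *
          Real.log (hmmFD π P W (T+1) z / hmmFD π P' W' (T+1) z))
        + ((∑ ℓ, ∑ m, π ℓ * P ℓ m * Real.log (P ℓ m / P' ℓ m))
          + (∑ ℓ, ∑ i, π ℓ * W ℓ i * Real.log (W ℓ i / W' ℓ i))) := by
  have hq : ∀ (T : ℕ) (z : Fin T → α × β), hmmFD π P W T z ≠ 0 → 0 < hmmFD π P' W' T z :=
    fun T z h => hmmFD_pos_transfer π π P P' W W' (fun a _ => hπpos a) hP' hW' T z h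
  have hp0 : ∀ (T : ℕ) (z : Fin T → α × β), 0 ≤ hmmFD π P W T z :=
    hmmFD_nonneg π P W (fun a => le_of_lt (hπpos a)) hP0 hW0
  have inner : ∀ z : Fin (T+1) → α × β,
      ∑ v : α × β, hmmFD π P W (T+2) (Fin.snoc z v) *
          Real.log (hmmFD π P W (T+2) (Fin.snoc z v) / hmmFD π P' W' (T+2) (Fin.snoc z v))
        = hmmFD π P W (T+1) z *
            Real.log (hmmFD π P W (T+1) z / hmmFD π P' W' (T+1) z)
          + hmmFD π P W (T+1) z * (∑ x, P (z (Fin.last T)).1 x *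
              Real.log (P (z (Fin.last T)).1 x / P' (z (Fin.last T)).1 x))
          + hmmFD π P W (T+1) z * (∑ x, P (z (Fin.last T)).1 x *
              (∑ o, W x o * Real.log (W x o / W' x o))) := by
    intro z
    have e : ∀ (x : α) (o : β),
        hmmFD π P W (T+2) (Fin.snoc z (x, o)) *
            Real.log (hmmFD π P W (T+2) (Fin.snoc z (x, o)) /
              hmmFD π P' W' (T+2) (Fin.snoc z (x, o)))
          = (hmmFD π P W (T+1) z *
              Real.log (hmmFD π P W (T+1) z / hmmFD π P' W' (T+1) z) *
                P (z (Fin.last T)).1 x) * W x o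
            + (hmmFD π P W (T+1) z * (P (z (Fin.last T)).1 x *
                Real.log (P (z (Fin.last T)).1 x / P' (z (Fin.last T)).1 x))) * W x o
            + hmmFD π P W (T+1) z * (P (z (Fin.last T)).1 x *
                (W x o * Real.log (W x o / W' x o))) := by
      intro x o
      rw [hmmFD_snoc, hmmFD_snoc]
      have hs := log_split3 (hmmFD π P W (T+1) z) (P (z (Fin.last T)).1 x) (W x o)
        (hmmFD π P' W' (T+1) z) (P' (z (Fin.last T)).1 x) (W' x o)
        (hp0 _ z) (hP0 _ x) (hW0 x o) (hq _ z) (hP' _ x) (hW' x o)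
      rw [hs]
      ring
    rw [Fintype.sum_prod_type,
      Finset.sum_congr rfl (fun x _ => Finset.sum_congr rfl (fun o _ => e x o))]
    simp only [Finset.sum_add_distrib]
    congr 1
    · congr 1
      · have e1 : ∀ x : α, ∑ o : β,
            (hmmFD π P W (T+1) z *
              Real.log (hmmFD π P W (T+1) z / hmmFD π P' W' (T+1) z) *
                P (z (Fin.last T)).1 x) * W x o
            = hmmFD π P W (T+1) z *
              Real.log (hmmFD π P W (T+1) z / hmmFD π P' W' (T+1) z) *
                P (z (Fin.last T)).1 x := by
          intro x; rw [← Finset.mul_sum, hW1, mul_one]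
        rw [Finset.sum_congr rfl (fun x _ => e1 x), ← Finset.mul_sum, hP1, mul_one]
      · have e2 : ∀ x : α, ∑ o : β,
            (hmmFD π P W (T+1) z * (P (z (Fin.last T)).1 x *
                Real.log (P (z (Fin.last T)).1 x / P' (z (Fin.last T)).1 x))) * W x o
            = hmmFD π P W (T+1) z * (P (z (Fin.last T)).1 x *
                Real.log (P (z (Fin.last T)).1 x / P' (z (Fin.last T)).1 x)) := by
          intro x; rw [← Finset.mul_sum, hW1, mul_one]
        rw [Finset.sum_congr rfl (fun x _ => e2 x), ← Finset.mul_sum]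
    · simp_rw [← Finset.mul_sum]
  rw [sum_snoc, Finset.sum_congr rfl (fun z _ => inner z)]
  simp only [Finset.sum_add_distrib]
  rw [add_assoc]
  congr 1
  congr 1
  · rw [last_marginal π P W hP1 hinv hW1 T
      (fun a => ∑ x, P a x * Real.log (P a x / P' a x))]
    apply Finset.sum_congr rfl
    intro ℓ _
    rw [Finset.mul_sum]
    exact Finset.sum_congr rfl fun m _ => by ring
  · rw [last_marginal π P W hP1 hinv hW1 T
      (fun a => ∑ x, P a x * (∑ o, W x o * Real.log (W x o / W' x o)))]
    simp only [Finset.mul_sum]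
    rw [Finset.sum_comm]
    apply Finset.sum_congr rfl
    intro x _
    rw [Finset.sum_comm]
    apply Finset.sum_congr rfl
    intro o _
    have e4 : ∀ ℓ, π ℓ * (P ℓ x * (W x o * Real.log (W x o / W' x o)))
        = π ℓ * P ℓ x * (W x o * Real.log (W x o / W' x o)) := fun ℓ => by ring
    rw [Finset.sum_congr rfl (fun ℓ _ => e4 ℓ), ← Finset.sum_mul, hinv]
    ring
lemma K_one
    (hπpos : ∀ a, 0 < π a) :
    ∑ z : Fin 1 → α × β, hmmFD π P W 1 z *
        Real.log (hmmFD π P W 1 z / hmmFD π P' W' 1 z)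
      = ∑ ℓ, ∑ i, π ℓ * W ℓ i * Real.log (W ℓ i / W' ℓ i) := by
  rw [sum_one]
  have e : ∀ v : α × β,
      hmmFD π P W 1 (fun _ => v) *
          Real.log (hmmFD π P W 1 (fun _ => v) / hmmFD π P' W' 1 (fun _ => v))
        = π v.1 * W v.1 v.2 * Real.log (W v.1 v.2 / W' v.1 v.2) := by
    intro v
    rw [hmmFD_one, hmmFD_one, mul_div_mul_left _ _ (ne_of_gt (hπpos v.1))]
  rw [Finset.sum_congr rfl (fun v _ => e v), Fintype.sum_prod_type]

lemma K_formula
    (hπpos : ∀ a, 0 < π a)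
    (hP0 : ∀ a b, 0 ≤ P a b) (hP1 : ∀ i, ∑ j, P i j = 1)
    (hinv : ∀ j, ∑ i, π i * P i j = π j)
    (hW0 : ∀ a b, 0 ≤ W a b) (hW1 : ∀ ℓ, ∑ i, W ℓ i = 1)
    (hP' : ∀ a b, P a b ≠ 0 → 0 < P' a b) (hW' : ∀ a b, W a b ≠ 0 → 0 < W' a b)
    (T : ℕ) :
    ∑ z : Fin (T+1) → α × β, hmmFD π P W (T+1) z *
        Real.log (hmmFD π P W (T+1) z / hmmFD π P' W' (T+1) z)
      = (T : ℝ) * ((∑ ℓ, ∑ m, π ℓ * P ℓ m * Real.log (P ℓ m / P' ℓ m))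
          + (∑ ℓ, ∑ i, π ℓ * W ℓ i * Real.log (W ℓ i / W' ℓ i)))
        + (∑ ℓ, ∑ i, π ℓ * W ℓ i * Real.log (W ℓ i / W' ℓ i)) := by
  induction T with
  | zero => rw [K_one π P P' W W' hπpos]; push_cast; ring
  | succ T ih =>
    rw [K_step π P P' W W' hπpos hP0 hP1 hinv hW0 hW1 hP' hW' T, ih]
    push_cast; ring

end S4

section S5
variable {α β YT : Type*} [Fintype α] [Fintype β] [Fintype YT]
variable (π : α → ℝ) (P : α → α → ℝ) (W : α → β → ℝ) (g : α → YT)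

lemma sum_ite_ge (c : α → ℝ) (hc : ∀ l, 0 ≤ c l) (ℓ : α) (j : YT) (hj : g ℓ = j) :
    c ℓ ≤ ∑ l, if g l = j then c l else 0 := by
  have hnn : ∀ l, 0 ≤ (if g l = j then c l else 0) := by
    intro l; by_cases h : g l = j <;> simp [h, hc l]
  have := Finset.single_le_sum (f := fun l => if g l = j then c l else 0)
    (fun l _ => hnn l) (Finset.mem_univ ℓ)
  simpa [hj] using this

lemma jointY_ge (hπ0 : ∀ a, 0 ≤ π a) (hP0 : ∀ a b, 0 ≤ P a b) (ℓ m : α) :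
    π ℓ * P ℓ m ≤ jointY π P g (g ℓ) (g m) := by
  unfold jointY
  have hnn : ∀ ℓ' m', 0 ≤ (if g ℓ' = g ℓ ∧ g m' = g m then π ℓ' * P ℓ' m' else 0) := by
    intro ℓ' m'
    by_cases h : g ℓ' = g ℓ ∧ g m' = g m <;> simp [h, mul_nonneg (hπ0 ℓ') (hP0 ℓ' m')]
  have h1 : π ℓ * P ℓ m ≤ ∑ m', if g ℓ = g ℓ ∧ g m' = g m then π ℓ * P ℓ m' else 0 := by
    have := Finset.single_le_sum (f := fun m' => if g ℓ = g ℓ ∧ g m' = g m then π ℓ * P ℓ m' else 0)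
      (fun m' _ => hnn ℓ m') (Finset.mem_univ m)
    simpa using this
  exact le_trans h1 (Finset.single_le_sum
    (f := fun ℓ' => ∑ m', if g ℓ' = g ℓ ∧ g m' = g m then π ℓ' * P ℓ' m' else 0)
    (fun ℓ' _ => Finset.sum_nonneg fun m' _ => hnn ℓ' m') (Finset.mem_univ ℓ))

lemma jointY_nonneg (hπ0 : ∀ a, 0 ≤ π a) (hP0 : ∀ a b, 0 ≤ P a b) (i j : YT) :
    0 ≤ jointY π P g i j :=
  Finset.sum_nonneg fun ℓ _ => Finset.sum_nonneg fun m _ => by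
    by_cases h : g ℓ = i ∧ g m = j <;> simp [h, mul_nonneg (hπ0 ℓ) (hP0 ℓ m)]

lemma s_pos (hπpos : ∀ a, 0 < π a) (ℓ : α) :
    0 < ∑ l, if g l = g ℓ then π l else 0 :=
  lt_of_lt_of_le (hπpos ℓ) (sum_ite_ge g π (fun l => le_of_lt (hπpos l)) ℓ (g ℓ) rfl)

lemma piLift_pos (hπpos : ∀ a, 0 < π a) (hP0 : ∀ a b, 0 ≤ P a b)
    (ℓ m : α) (h : P ℓ m ≠ 0) : 0 < piLift π P g ℓ m := by
  unfold piLift aggQ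
  have hP : 0 < P ℓ m := lt_of_le_of_ne (hP0 ℓ m) (Ne.symm h)
  have hJ : 0 < jointY π P g (g ℓ) (g m) :=
    lt_of_lt_of_le (mul_pos (hπpos ℓ) hP) (jointY_ge π P g (fun a => le_of_lt (hπpos a)) hP0 ℓ m)
  exact mul_pos (div_pos (hπpos m) (s_pos π g hπpos m))
    (div_pos hJ (s_pos π g hπpos ℓ))

lemma wNum_ge (hπ0 : ∀ a, 0 ≤ π a) (hW0 : ∀ a b, 0 ≤ W a b) (ℓ : α) (i : β) :
    π ℓ * W ℓ i ≤ ∑ l, if g l = g ℓ then π l * W l i else 0 :=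
  sum_ite_ge g (fun l => π l * W l i) (fun l => mul_nonneg (hπ0 l) (hW0 l i)) ℓ (g ℓ) rfl

lemma W'_pos (hπpos : ∀ a, 0 < π a) (hW0 : ∀ a b, 0 ≤ W a b)
    (ℓ : α) (i : β) (h : W ℓ i ≠ 0) :
    0 < (∑ l, if g l = g ℓ then π l * W l i else 0) / (∑ l, if g l = g ℓ then π l else 0) := by
  have hW : 0 < W ℓ i := lt_of_le_of_ne (hW0 ℓ i) (Ne.symm h)
  exact div_pos (lt_of_lt_of_le (mul_pos (hπpos ℓ) hW)
    (wNum_ge π W g (fun a => le_of_lt (hπpos a)) hW0 ℓ i)) (s_pos π g hπpos ℓ)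

end S5

section S6
variable {α β YT : Type*} [Fintype α] [Fintype β] [Fintype YT]
variable (π : α → ℝ) (P : α → α → ℝ) (W : α → β → ℝ) (g : α → YT)

lemma regroup {A B : Type*} [Fintype A] [Fintype B] (c : A → ℝ) (gg : A → B) (f : B → ℝ) :
    ∑ b, (∑ a, if gg a = b then c a else 0) * f b = ∑ a, c a * f (gg a) := by
  have e : ∀ b, (∑ a, if gg a = b then c a else 0) * f b
      = ∑ a, if gg a = b then c a * f b else 0 := by
    intro b
    rw [Finset.sum_mul]
    exact Finset.sum_congr rfl fun a _ => by
      by_cases h : gg a = b <;> simp [h]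
  rw [Finset.sum_congr rfl (fun b _ => e b), Finset.sum_comm]
  apply Finset.sum_congr rfl
  intro a _
  have e2 : ∀ b, (if gg a = b then c a * f b else 0) = if gg a = b then c a * f (gg a) else 0 := by
    intro b
    by_cases h : gg a = b
    · rw [if_pos h, if_pos h, h]
    · rw [if_neg h, if_neg h]
  rw [Finset.sum_congr rfl (fun b _ => e2 b)]
  simp

lemma jointY_prod (i j : YT) :
    jointY π P g i j = ∑ p : α × α, if (g p.1, g p.2) = (i, j) then π p.1 * P p.1 p.2 else 0 := by
  unfold jointY
  rw [Fintype.sum_prod_type]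
  simp [Prod.mk.injEq]

lemma jointY_row (hP1 : ∀ i, ∑ j, P i j = 1) (i : YT) :
    ∑ j, jointY π P g i j = ∑ l, if g l = i then π l else 0 := by
  unfold jointY
  rw [Finset.sum_comm]
  apply Finset.sum_congr rfl
  intro ℓ _
  rw [Finset.sum_comm]
  have e : ∀ m, (∑ j, if g ℓ = i ∧ g m = j then π ℓ * P ℓ m else 0)
      = if g ℓ = i then π ℓ * P ℓ m else 0 := by
    intro m
    by_cases h : g ℓ = i <;> simp [h]
  rw [Finset.sum_congr rfl (fun m _ => e m)]
  by_cases h : g ℓ = i <;> simp [h, ← Finset.mul_sum, hP1 ℓ]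

lemma jointY_col (hinv : ∀ j, ∑ i, π i * P i j = π j) (j : YT) :
    ∑ i, jointY π P g i j = ∑ l, if g l = j then π l else 0 := by
  unfold jointY
  rw [Finset.sum_comm]
  have e1 : ∀ ℓ, (∑ i, ∑ m, if g ℓ = i ∧ g m = j then π ℓ * P ℓ m else 0)
      = ∑ m, if g m = j then π ℓ * P ℓ m else 0 := by
    intro ℓ
    rw [Finset.sum_comm]
    apply Finset.sum_congr rfl
    intro m _
    by_cases h : g m = j <;> simp [h]
  rw [Finset.sum_congr rfl (fun ℓ _ => e1 ℓ), Finset.sum_comm]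
  apply Finset.sum_congr rfl
  intro m _
  by_cases h : g m = j <;> simp [h, hinv m]

end S6

section S7
variable {α β YT : Type*} [Fintype α] [Fintype β] [Fintype YT]
variable (π : α → ℝ) (P : α → α → ℝ) (W : α → β → ℝ) (g : α → YT)

lemma group_sum (F : YT → YT → ℝ) :
    ∑ i, ∑ j, jointY π P g i j * F i j = ∑ ℓ, ∑ m, π ℓ * P ℓ m * F (g ℓ) (g m) := by
  set X : YT → YT → α → α → ℝ :=
    fun i j ℓ m => if g ℓ = i ∧ g m = j then π ℓ * P ℓ m * F (g ℓ) (g m) else 0 with hX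
  have e1 : ∀ i j, jointY π P g i j * F i j = ∑ ℓ, ∑ m, X i j ℓ m := by
    intro i j
    simp only [hX]
    unfold jointY
    rw [Finset.sum_mul]
    apply Finset.sum_congr rfl
    intro ℓ _
    rw [Finset.sum_mul]
    apply Finset.sum_congr rfl
    intro m _
    by_cases h : g ℓ = i ∧ g m = j
    · rw [if_pos h, if_pos h, h.1, h.2]
    · simp [h]
  rw [Finset.sum_congr rfl (fun i (_ : i ∈ Finset.univ) =>
    Finset.sum_congr rfl (fun j _ => e1 i j))]
  have s1 : ∀ i, (∑ j, ∑ ℓ, ∑ m, X i j ℓ m) = ∑ ℓ, ∑ j, ∑ m, X i j ℓ m :=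
    fun i => Finset.sum_comm
  rw [Finset.sum_congr rfl (fun i (_ : i ∈ Finset.univ) => s1 i), Finset.sum_comm]
  have s2 : ∀ ℓ i, (∑ j, ∑ m, X i j ℓ m) = ∑ m, ∑ j, X i j ℓ m :=
    fun ℓ i => Finset.sum_comm
  rw [Finset.sum_congr rfl (fun ℓ (_ : ℓ ∈ Finset.univ) =>
    Finset.sum_congr rfl (fun i _ => s2 ℓ i))]
  have s3 : ∀ ℓ, (∑ i, ∑ m, ∑ j, X i j ℓ m) = ∑ m, ∑ i, ∑ j, X i j ℓ m :=
    fun ℓ => Finset.sum_comm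
  rw [Finset.sum_congr rfl (fun ℓ (_ : ℓ ∈ Finset.univ) => s3 ℓ)]
  apply Finset.sum_congr rfl
  intro ℓ _
  apply Finset.sum_congr rfl
  intro m _
  simp only [hX]
  simp [ite_and]

lemma klA (hπpos : ∀ a, 0 < π a) (hP0 : ∀ a b, 0 ≤ P a b) (hP1 : ∀ i, ∑ j, P i j = 1)
    (hinv : ∀ j, ∑ i, π i * P i j = π j) :
    ∑ ℓ, ∑ m, π ℓ * P ℓ m * Real.log (P ℓ m / piLift π P g ℓ m)
      = mutInf (fun ℓ m => π ℓ * P ℓ m) - mutInf (jointY π P g) := by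
  have hm1 : mutInf (fun ℓ m => π ℓ * P ℓ m)
      = ∑ ℓ, ∑ m, π ℓ * P ℓ m * Real.log ((π ℓ * P ℓ m) / (π ℓ * π m)) := by
    unfold mutInf
    apply Finset.sum_congr rfl
    intro ℓ _
    apply Finset.sum_congr rfl
    intro m _
    rw [← Finset.mul_sum, hP1 ℓ, mul_one, hinv m]
  have hm2 : mutInf (jointY π P g)
      = ∑ ℓ, ∑ m, π ℓ * P ℓ m *
          Real.log (jointY π P g (g ℓ) (g m) /
            ((∑ l, if g l = g ℓ then π l else 0) * (∑ l, if g l = g m then π l else 0))) := by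
    unfold mutInf
    have m1 : ∀ i j, jointY π P g i j *
        Real.log (jointY π P g i j /
          ((∑ b', jointY π P g i b') * (∑ a', jointY π P g a' j)))
        = jointY π P g i j * Real.log (jointY π P g i j /
            ((∑ l, if g l = i then π l else 0) * (∑ l, if g l = j then π l else 0))) := by
      intro i j
      rw [jointY_row π P g hP1 i, jointY_col π P g hinv j]
    rw [Finset.sum_congr rfl (fun i (_ : i ∈ Finset.univ) =>
      Finset.sum_congr rfl (fun j _ => m1 i j))]
    exact group_sum π P g (fun i j => Real.log (jointY π P g i j /
      ((∑ l, if g l = i then π l else 0) * (∑ l, if g l = j then π l else 0))))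
  have term : ∀ ℓ m, π ℓ * P ℓ m * Real.log (P ℓ m / piLift π P g ℓ m)
      = π ℓ * P ℓ m * Real.log ((π ℓ * P ℓ m) / (π ℓ * π m))
        - π ℓ * P ℓ m *
            Real.log (jointY π P g (g ℓ) (g m) /
              ((∑ l, if g l = g ℓ then π l else 0) * (∑ l, if g l = g m then π l else 0))) := by
    intro ℓ m
    by_cases h : P ℓ m = 0
    · simp [h]
    · have hPpos : 0 < P ℓ m := lt_of_le_of_ne (hP0 ℓ m) (Ne.symm h)
      have hsℓ := s_pos π g hπpos ℓ
      have hsm := s_pos π g hπpos m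
      have hJ : 0 < jointY π P g (g ℓ) (g m) :=
        lt_of_lt_of_le (mul_pos (hπpos ℓ) hPpos)
          (jointY_ge π P g (fun a => le_of_lt (hπpos a)) hP0 ℓ m)
      have hx : 0 < (π ℓ * P ℓ m) / (π ℓ * π m) :=
        div_pos (mul_pos (hπpos ℓ) hPpos) (mul_pos (hπpos ℓ) (hπpos m))
      have hy : 0 < jointY π P g (g ℓ) (g m) /
          ((∑ l, if g l = g ℓ then π l else 0) * (∑ l, if g l = g m then π l else 0)) :=
        div_pos hJ (mul_pos hsℓ hsm)
      have harg : P ℓ m / piLift π P g ℓ m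
          = ((π ℓ * P ℓ m) / (π ℓ * π m)) /
            (jointY π P g (g ℓ) (g m) /
              ((∑ l, if g l = g ℓ then π l else 0) * (∑ l, if g l = g m then π l else 0))) := by
        unfold piLift aggQ
        have hid : (∑ ℓ', ∑ m', if g ℓ' = g ℓ ∧ g m' = g m then π ℓ' * P ℓ' m' else 0)
            = jointY π P g (g ℓ) (g m) := rfl
        rw [hid]
        have n1 : π ℓ ≠ 0 := ne_of_gt (hπpos ℓ)
        have n2 : π m ≠ 0 := ne_of_gt (hπpos m)
        have n3 : (∑ l, if g l = g ℓ then π l else 0) ≠ 0 := ne_of_gt hsℓ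
        have n4 : (∑ l, if g l = g m then π l else 0) ≠ 0 := ne_of_gt hsm
        have n5 : jointY π P g (g ℓ) (g m) ≠ 0 := ne_of_gt hJ
        field_simp
      rw [harg, Real.log_div (ne_of_gt hx) (ne_of_gt hy), mul_sub]
  rw [Finset.sum_congr rfl (fun ℓ (_ : ℓ ∈ Finset.univ) =>
    Finset.sum_congr rfl (fun m _ => term ℓ m)), hm1, hm2]
  simp only [Finset.sum_sub_distrib]

lemma klB (hπpos : ∀ a, 0 < π a) (hW0 : ∀ a b, 0 ≤ W a b) (hW1 : ∀ ℓ, ∑ i, W ℓ i = 1) :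
    ∑ ℓ, ∑ i, π ℓ * W ℓ i *
        Real.log (W ℓ i / ((∑ l, if g l = g ℓ then π l * W l i else 0) /
          (∑ l, if g l = g ℓ then π l else 0)))
      = condMutInf (fun (i : β) (ℓ : α) (j : YT) => if g ℓ = j then π ℓ * W ℓ i else 0) := by
  unfold condMutInf
  have hM2 : ∀ j : YT, (∑ a' : β, ∑ b' : α, if g b' = j then π b' * W b' a' else 0)
      = ∑ l, if g l = j then π l else 0 := by
    intro j
    rw [Finset.sum_comm]
    apply Finset.sum_congr rfl
    intro l _
    by_cases h : g l = j <;> simp [h, ← Finset.mul_sum, hW1 l]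
  have hMa : ∀ (b : α) (c : YT), (∑ a' : β, if g b = c then π b * W b a' else 0)
      = if g b = c then π b else 0 := by
    intro b c
    by_cases h : g b = c <;> simp [h, ← Finset.mul_sum, hW1 b]
  simp_rw [hM2, hMa]
  conv_lhs => rw [Finset.sum_comm]
  apply Finset.sum_congr rfl
  intro i _
  apply Finset.sum_congr rfl
  intro ℓ _
  have e : ∀ (i : β) (c : YT),
      (if g ℓ = c then π ℓ * W ℓ i else 0) *
          Real.log (((if g ℓ = c then π ℓ * W ℓ i else 0) * (∑ l, if g l = c then π l else 0)) /
            ((∑ b' : α, if g b' = c then π b' * W b' i else 0) * (if g ℓ = c then π ℓ else 0)))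
        = if g ℓ = c then (π ℓ * W ℓ i) *
            Real.log ((π ℓ * W ℓ i * (∑ l, if g l = c then π l else 0)) /
              ((∑ b' : α, if g b' = c then π b' * W b' i else 0) * π ℓ)) else 0 := by
    intro i c
    by_cases h : g ℓ = c <;> simp [h]
  rw [Finset.sum_congr rfl (fun c (_ : c ∈ Finset.univ) => e i c)]
  rw [Finset.sum_ite_eq Finset.univ (g ℓ) (fun c => (π ℓ * W ℓ i) *
    Real.log ((π ℓ * W ℓ i * (∑ l, if g l = c then π l else 0)) /
      ((∑ b' : α, if g b' = c then π b' * W b' i else 0) * π ℓ))), if_pos (Finset.mem_univ _)]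
  by_cases h : W ℓ i = 0
  · simp [h]
  · have hWpos : 0 < W ℓ i := lt_of_le_of_ne (hW0 ℓ i) (Ne.symm h)
    have hs := s_pos π g hπpos ℓ
    have hw : 0 < ∑ l, if g l = g ℓ then π l * W l i else 0 :=
      lt_of_lt_of_le (mul_pos (hπpos ℓ) hWpos)
        (wNum_ge π W g (fun a => le_of_lt (hπpos a)) hW0 ℓ i)
    have harg : W ℓ i / ((∑ l, if g l = g ℓ then π l * W l i else 0) /
        (∑ l, if g l = g ℓ then π l else 0))
        = (π ℓ * W ℓ i * (∑ l, if g l = g ℓ then π l else 0)) /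
          ((∑ b' : α, if g b' = g ℓ then π b' * W b' i else 0) * π ℓ) := by
      rw [div_div_eq_mul_div, div_eq_div_iff (ne_of_gt hw) (ne_of_gt (mul_pos hw (hπpos ℓ)))]
      ring
    rw [harg]
end S7

/-- For a stationary HMM `(X', O)` with chain `(π, P)` and observation
matrix `W`, and the lifted HMM with state transition matrix the `π`-lifting of the
aggregation `Q` of `P` w.r.t. `g` and observation matrix `W'_{ℓ,i} = P(O_1 = i | Y_1 = g(ℓ))`,
the KL divergence rate between the joint processes equals
`I(X'_1; X'_2) − I(Y_1; Y_2) + I(O_1; X'_1 | Y_1)`. -/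
theorem hmm_pi_lifting_KLDR_formula
    {α β YT : Type*} [Fintype α] [DecidableEq α] [Fintype β] [Fintype YT]
    (P : Matrix α α ℝ) (hP0 : ∀ i j, 0 ≤ P i j) (hP1 : ∀ i, ∑ j, P i j = 1)
    (hirr : MCIrreducible P) (hap : MCAperiodic P)
    (π : α → ℝ) (hπ0 : ∀ i, 0 ≤ π i) (hπ1 : ∑ i, π i = 1)
    (hinv : ∀ j, ∑ i, π i * P i j = π j)
    (W : α → β → ℝ) (hW0 : ∀ ℓ i, 0 ≤ W ℓ i) (hW1 : ∀ ℓ, ∑ i, W ℓ i = 1)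
    (g : α → YT) :
    Filter.Tendsto
      (fun T : ℕ => (((T : ℝ)⁻¹ : ℝ) : EReal) *
        klDiv (hmmFD π (fun a b => P a b) W T)
          (hmmFD π (piLift π (fun a b => P a b) g)
            (fun ℓ i => (∑ l, if g l = g ℓ then π l * W l i else 0) /
              (∑ l, if g l = g ℓ then π l else 0)) T))
      Filter.atTop
      (nhds (((mutInf (fun ℓ m => π ℓ * P ℓ m)
          - mutInf (jointY π (fun a b => P a b) g)
          + condMutInf (fun (i : β) (ℓ : α) (j : YT) =>
              if g ℓ = j then π ℓ * W ℓ i else 0)) : ℝ) : EReal)) := by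
  have hπpos : ∀ a, 0 < π a := pi_pos P hP0 hirr π hπ0 hπ1 hinv
  have hP'pos : ∀ a b, P a b ≠ 0 → 0 < piLift π (fun a b => P a b) g a b :=
    fun a b h => piLift_pos π (fun a b => P a b) g hπpos hP0 a b h
  have hW'pos : ∀ (a : α) (b : β), W a b ≠ 0 →
      0 < (∑ l, if g l = g a then π l * W l b else 0) / (∑ l, if g l = g a then π l else 0) :=
    fun a b h => W'_pos π W g hπpos hW0 a b h
  have habs : ∀ (T : ℕ) (z : Fin T → α × β),
      hmmFD π (piLift π (fun a b => P a b) g)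
        (fun ℓ i => (∑ l, if g l = g ℓ then π l * W l i else 0) /
          (∑ l, if g l = g ℓ then π l else 0)) T z = 0 →
      hmmFD π (fun a b => P a b) W T z = 0 := by
    intro T z h
    by_contra hne
    exact (ne_of_gt (hmmFD_pos_transfer π π (fun a b => P a b)
      (piLift π (fun a b => P a b) g) W
      (fun ℓ i => (∑ l, if g l = g ℓ then π l * W l i else 0) /
        (∑ l, if g l = g ℓ then π l else 0))
      (fun a _ => hπpos a) hP'pos hW'pos T z hne)) h
  have hkl : ∀ T : ℕ, klDiv (hmmFD π (fun a b => P a b) W T)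
      (hmmFD π (piLift π (fun a b => P a b) g)
        (fun ℓ i => (∑ l, if g l = g ℓ then π l * W l i else 0) /
          (∑ l, if g l = g ℓ then π l else 0)) T)
      = (((∑ z : Fin T → α × β, hmmFD π (fun a b => P a b) W T z *
          Real.log (hmmFD π (fun a b => P a b) W T z /
            hmmFD π (piLift π (fun a b => P a b) g)
              (fun ℓ i => (∑ l, if g l = g ℓ then π l * W l i else 0) /
                (∑ l, if g l = g ℓ then π l else 0)) T z)) : ℝ) : EReal) := by
    intro T
    unfold klDiv
    rw [if_pos (habs T)]
  have hKT := K_formula π (fun a b => P a b) (piLift π (fun a b => P a b) g) W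
    (fun ℓ i => (∑ l, if g l = g ℓ then π l * W l i else 0) /
      (∑ l, if g l = g ℓ then π l else 0))
    hπpos hP0 hP1 hinv hW0 hW1 hP'pos hW'pos
  have hAB : mutInf (fun ℓ m => π ℓ * P ℓ m) - mutInf (jointY π (fun a b => P a b) g)
      + condMutInf (fun (i : β) (ℓ : α) (j : YT) => if g ℓ = j then π ℓ * W ℓ i else 0)
      = (∑ ℓ, ∑ m, π ℓ * P ℓ m * Real.log (P ℓ m / piLift π (fun a b => P a b) g ℓ m))
        + (∑ ℓ, ∑ i, π ℓ * W ℓ i * Real.log (W ℓ i /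
            ((∑ l, if g l = g ℓ then π l * W l i else 0) /
              (∑ l, if g l = g ℓ then π l else 0)))) := by
    rw [klA π (fun a b => P a b) g hπpos hP0 hP1 hinv, klB π W g hπpos hW0 hW1]
  set A : ℝ := ∑ ℓ, ∑ m, π ℓ * P ℓ m * Real.log (P ℓ m / piLift π (fun a b => P a b) g ℓ m)
    with hA
  set B : ℝ := ∑ ℓ, ∑ i, π ℓ * W ℓ i * Real.log (W ℓ i /
      ((∑ l, if g l = g ℓ then π l * W l i else 0) /
        (∑ l, if g l = g ℓ then π l else 0))) with hB
  have lim : Filter.Tendsto (fun T : ℕ => ((((A + B) - A * (T:ℝ)⁻¹ : ℝ)) : EReal))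
      Filter.atTop (nhds (((A + B : ℝ)) : EReal)) := by
    rw [EReal.tendsto_coe]
    have h0 : Filter.Tendsto (fun T : ℕ => A * (T:ℝ)⁻¹) Filter.atTop (nhds 0) := by
      have := tendsto_inv_atTop_nhds_zero_nat.const_mul A
      simpa using this
    have := (tendsto_const_nhds (x := A + B) (f := Filter.atTop (α := ℕ))).sub h0
    simpa using this
  rw [hAB]
  apply Filter.Tendsto.congr' _ lim
  rw [Filter.eventuallyEq_iff_exists_mem]
  refine ⟨{T | 1 ≤ T}, Filter.mem_atTop 1, ?_⟩
  intro T hT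
  show _ = _
  beta_reduce
  obtain ⟨T', rfl⟩ : ∃ T', T = T' + 1 := ⟨T - 1, (Nat.succ_pred_eq_of_pos hT).symm⟩
  rw [hkl (T' + 1), hKT T', ← EReal.coe_mul]
  congr 1
  have hpos : (0:ℝ) < ((T' : ℝ) + 1) := by positivity
  have hcast : (((T' + 1 : ℕ) : ℝ)) = (T' : ℝ) + 1 := by push_cast; ring
  rw [hcast]
  field_simp
  ring
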